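/- For any graph G on n vertices with no isolated vertices, n+2 ≤ IR(G, 2K_2) ≤ 2n, and both bounds are attained (the lower bound by paths P_n for n ≥ 5, the upper bound by complete graphs K_n). -/

import Mathlib

/-
The upper bound comes from two disjoint copies of `G`: either some copy has no blue edge, or a
blue edge in each copy gives a blue induced `2K_2`. For the lower bound, let `F` strongly arrow
`(G, 2K_2)`, let `S` be a clique of `F` (an edge of a copy of `G`, or the whole copy when
`G = K_n`), and colour blue exactly the edges meeting `S`. A blue induced `2K_2` would meet `S` in
two adjacent vertices, so there is a red copy of `G`; as `G` has no isolated vertex it misses `S`,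
whence `|F| ≥ n + |S|`. Finally `C_{n+2}` strongly arrows `(P_n, 2K_2)`: two blue edges at cyclic
distance at least 3 form an induced `2K_2`; otherwise, since `n + 2 ≥ 7`, all blue edges lie among
three consecutive edges and the other `n - 1` edges form a red induced `P_n`.
-/

open SimpleGraph

/-- The disjoint union of `s` copies of the graph `G`. -/
def SimpleGraph.Copies {β : Type*} (s : ℕ) (G : SimpleGraph β) :
    SimpleGraph (Fin s × β) where
  Adj x y := x.1 = y.1 ∧ G.Adj x.2 y.2
  symm := ⟨fun x y h => ⟨h.1.symm, h.2.symm⟩⟩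
  loopless := ⟨fun x h => G.loopless.irrefl x.2 h.2⟩

/-- `F` strongly arrows `(G, H)`: every red-blue (`true`/`false`) colouring of the
edges of `F` yields a red induced copy of `G` or a blue induced copy of `H`. -/
def StronglyArrows {α β γ : Type*}
    (F : SimpleGraph α) (G : SimpleGraph β) (H : SimpleGraph γ) : Prop :=
  ∀ c : Sym2 α → Bool,
    (∃ f : G ↪g F, ∀ a b : β, G.Adj a b → c s(f a, f b) = true) ∨
    (∃ f : H ↪g F, ∀ a b : γ, H.Adj a b → c s(f a, f b) = false)

/-- The induced Ramsey number `IR(G, H)`. -/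
noncomputable def IR {β γ : Type*} (G : SimpleGraph β) (H : SimpleGraph γ) : ℕ :=
  sInf {n : ℕ | ∃ F : SimpleGraph (Fin n), StronglyArrows F G H}

/-- The single-edge graph `K_2`. -/
def K2 : SimpleGraph (Fin 2) := ⊤

/-- Two disjoint edges `2K_2`. -/
def twoK2 : SimpleGraph (Fin 2 × Fin 2) := SimpleGraph.Copies 2 K2

namespace SimpleGraph.Copies

variable {α β γ : Type*} {k : ℕ}

theorem adj_iff {G : SimpleGraph β} {x y : Fin k × β} :
    (Copies k G).Adj x y ↔ x.1 = y.1 ∧ G.Adj x.2 y.2 := Iff.rfl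

def embedding (G : SimpleGraph β) (i : Fin k) : G ↪g Copies k G where
  toFun x := (i, x)
  inj' := Prod.mk_right_injective i
  map_rel_iff' := by simp [adj_iff]

def map {G : SimpleGraph β} {H : SimpleGraph γ} (f : Fin k → G ↪g H) :
    Copies k G ↪g Copies k H where
  toFun x := (x.1, f x.1 x.2)
  inj' := by
    rintro ⟨i, x⟩ ⟨j, y⟩ h
    obtain ⟨rfl, h⟩ := Prod.mk.inj h
    simpa using h
  map_rel_iff' {x y} := by
    obtain ⟨i, x⟩ := x
    obtain ⟨j, y⟩ := y
    change (Copies k H).Adj (i, f i x) (j, f j y) ↔ (Copies k G).Adj (i, x) (j, y)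
    simp only [adj_iff]
    constructor <;> rintro ⟨rfl, h⟩
    exacts [⟨rfl, (f i).map_adj_iff.mp h⟩, ⟨rfl, (f i).map_adj_iff.mpr h⟩]

theorem K2_color_eq_of_forall {g : Fin k × Fin 2 → α} {c : Sym2 α → Bool} {b : Bool}
    (hc : ∀ i, c s(g (i, 0), g (i, 1)) = b) {x y : Fin k × Fin 2}
    (hxy : (Copies k K2).Adj x y) : c s(g x, g y) = b := by
  obtain ⟨i, x⟩ := x
  obtain ⟨j, y⟩ := y
  obtain ⟨rfl, hxy⟩ := adj_iff.mp hxy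
  fin_cases x <;> fin_cases y
  · exact absurd rfl hxy
  · exact hc i
  · rw [Sym2.eq_swap]; exact hc i
  · exact absurd rfl hxy

end SimpleGraph.Copies

theorem twoK2_adj {x y : Fin 2 × Fin 2} : twoK2.Adj x y ↔ x.1 = y.1 ∧ x.2 ≠ y.2 := Iff.rfl

def SimpleGraph.Adj.embeddingK2 {β : Type*} {G : SimpleGraph β} {a b : β} (h : G.Adj a b) :
    K2 ↪g G where
  toFun := ![a, b]
  inj' x y := by fin_cases x <;> fin_cases y <;> simp [h.ne, h.ne.symm]
  map_rel_iff' {x y} := by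
    change G.Adj (![a, b] x) (![a, b] y) ↔ K2.Adj x y
    fin_cases x <;> fin_cases y <;> simp [K2, h, h.symm]

section StronglyArrows

variable {α α' β γ : Type*} {F : SimpleGraph α} {G : SimpleGraph β} {H : SimpleGraph γ}

theorem StronglyArrows.of_iso {F' : SimpleGraph α'} (e : F ≃g F') (h : StronglyArrows F G H) :
    StronglyArrows F' G H := by
  intro c
  rcases h fun s => c (s.map e) with ⟨f, hf⟩ | ⟨f, hf⟩
  · exact Or.inl ⟨e.toEmbedding.comp f, fun a b hab => by simpa using hf a b hab⟩
  · exact Or.inr ⟨e.toEmbedding.comp f, fun a b hab => by simpa using hf a b hab⟩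

theorem StronglyArrows.nonempty_embedding (h : StronglyArrows F G H) {x y : γ} (hxy : H.Adj x y) :
    Nonempty (G ↪g F) := by
  rcases h fun _ => true with ⟨f, -⟩ | ⟨-, hf⟩
  · exact ⟨f⟩
  · cases hf x y hxy

theorem StronglyArrows.exists_fin_card [Fintype α] (h : StronglyArrows F G H) :
    ∃ F' : SimpleGraph (Fin (Fintype.card α)), StronglyArrows F' G H :=
  ⟨_, h.of_iso (Iso.map (Fintype.equivFin α) F)⟩

theorem IR_le_card [Fintype α] (h : StronglyArrows F G H) : IR G H ≤ Fintype.card α :=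
  Nat.sInf_le h.exists_fin_card

theorem exists_stronglyArrows_IR [Fintype α] (h : StronglyArrows F G H) :
    ∃ F' : SimpleGraph (Fin (IR G H)), StronglyArrows F' G H :=
  Nat.sInf_mem (s := {n | ∃ F' : SimpleGraph (Fin n), StronglyArrows F' G H})
    ⟨_, h.exists_fin_card⟩

theorem Copies.stronglyArrows (G : SimpleGraph β) (k : ℕ) :
    StronglyArrows (Copies k G) G (Copies k K2) := by
  intro c
  by_cases hred : ∃ i, ∀ a b, G.Adj a b → c s((i, a), (i, b)) = true
  · obtain ⟨i, hi⟩ := hred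
    exact Or.inl ⟨Copies.embedding G i, hi⟩
  · simp only [not_exists, not_forall, Bool.not_eq_true] at hred
    choose a b hab hblue using hred
    exact Or.inr ⟨Copies.map fun i => (hab i).embeddingK2, fun x y =>
      Copies.K2_color_eq_of_forall hblue⟩

theorem Copies.stronglyArrows_twoK2 (G : SimpleGraph β) : StronglyArrows (Copies 2 G) G twoK2 :=
  Copies.stronglyArrows G 2

theorem StronglyArrows.card_add_le_of_isNClique [Fintype α] [Fintype β]
    (hF : StronglyArrows F G twoK2) (hG : ∀ v, ∃ w, G.Adj v w) {S : Finset α} {k : ℕ}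
    (hS : F.IsNClique k S) : Fintype.card β + k ≤ Fintype.card α := by
  classical
  rcases hF fun e => decide (∀ x ∈ S, x ∉ e) with ⟨f, hf⟩ | ⟨f, hf⟩
  · have hfS (a : β) : f a ∈ Sᶜ := by
      obtain ⟨b, hab⟩ := hG a
      simpa using of_decide_eq_true (hf a b hab) (f a)
    calc Fintype.card β + k = (Finset.univ.map f.toEmbedding).card + S.card := by
          simp [hS.card_eq]
      _ ≤ Sᶜ.card + S.card := by
          gcongr
          intro x
          simp only [Finset.mem_map, Finset.mem_univ, true_and]
          rintro ⟨a, rfl⟩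
          exact hfS a
      _ = Fintype.card α := Finset.card_compl_add_card S
  · have hmeet (i : Fin 2) : ∃ j, f (i, j) ∈ S := by
      have := hf (i, 0) (i, 1) (twoK2_adj.mpr ⟨rfl, by simp⟩)
      simp only [decide_eq_false_iff_not, not_forall, not_not, Sym2.mem_iff] at this
      obtain ⟨x, hxS, rfl | rfl⟩ := this
      exacts [⟨0, hxS⟩, ⟨1, hxS⟩]
    obtain ⟨j₀, h₀⟩ := hmeet 0
    obtain ⟨j₁, h₁⟩ := hmeet 1
    have hne : f (0, j₀) ≠ f (1, j₁) := f.injective.ne (by simp)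
    have := twoK2_adj.mp (f.map_adj_iff.mp (hS.isClique h₀ h₁ hne))
    exact absurd this.1 (by simp)

theorem card_add_card_le_IR_twoK2 [Fintype β] [Fintype γ] (hG : ∀ v, ∃ w, G.Adj v w)
    (e : (⊤ : SimpleGraph γ) ↪g G) : Fintype.card β + Fintype.card γ ≤ IR G twoK2 := by
  obtain ⟨F, hF⟩ := exists_stronglyArrows_IR (Copies.stronglyArrows_twoK2 G)
  obtain ⟨f⟩ :=
    hF.nonempty_embedding (x := (0, 0)) (y := (0, 1)) (twoK2_adj.mpr ⟨rfl, by decide⟩)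
  simpa using hF.card_add_le_of_isNClique hG (isNClique_map_copy_top (f.comp e).toCopy)

end StronglyArrows

theorem IR_twoK2_le {β : Type*} [Fintype β] (G : SimpleGraph β) :
    IR G twoK2 ≤ 2 * Fintype.card β := by
  simpa using IR_le_card (Copies.stronglyArrows_twoK2 G)

theorem card_add_two_le_IR_twoK2 {β : Type*} [Fintype β] [Nonempty β] {G : SimpleGraph β}
    (hG : ∀ v, ∃ w, G.Adj v w) : Fintype.card β + 2 ≤ IR G twoK2 := by
  obtain ⟨v⟩ := ‹Nonempty β›
  obtain ⟨w, hvw⟩ := hG v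
  simpa using card_add_card_le_IR_twoK2 hG hvw.embeddingK2

theorem IR_top_twoK2 {n : ℕ} (hn : 2 ≤ n) : IR (⊤ : SimpleGraph (Fin n)) twoK2 = 2 * n := by
  have : Nontrivial (Fin n) := Fin.nontrivial_iff_two_le.mpr hn
  refine le_antisymm (by simpa using IR_twoK2_le (⊤ : SimpleGraph (Fin n))) ?_
  have hK (v : Fin n) : ∃ w, (⊤ : SimpleGraph (Fin n)).Adj v w := by
    simpa [eq_comm] using exists_ne v
  simpa [two_mul] using card_add_card_le_IR_twoK2 hK (Embedding.refl (G := ⊤))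

theorem Fin.exists_arc_of_pairwise_close {m : ℕ} [NeZero m] (hm : 7 ≤ m) {P : Fin m → Prop}
    (hP : ∀ i j, P i → P j → (j - i).val ≤ 2 ∨ (i - j).val ≤ 2) :
    ∃ k, ∀ j, P j → (j - k).val ≤ 2 := by
  classical
  by_cases hne : ∃ i, P i
  swap
  · exact ⟨0, fun j hj => (hne ⟨j, hj⟩).elim⟩
  obtain ⟨i, hi⟩ := hne
  -- the arc starts at the element of `P` furthest behind `i`, within distance 2 of `i`
  obtain ⟨k, hk, hmax⟩ := Finset.exists_max_image
    (Finset.univ.filter fun j => P j ∧ (i - j).val ≤ 2) (fun j => (i - j).val)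
    ⟨i, by simp [hi]⟩
  simp only [Finset.mem_filter, Finset.mem_univ, true_and] at hk hmax
  obtain ⟨hk, hki⟩ := hk
  refine ⟨k, fun j hj => ?_⟩
  have hjk := hP k j hk hj
  have hij := hP i j hi hj
  have hback : (i - j).val ≤ 2 → (i - j).val ≤ (i - k).val := fun h => hmax j ⟨hj, h⟩
  fin_omega

theorem Fin.val_sub_add_val_sub {m : ℕ} [NeZero m] {i j : Fin m} (h : i ≠ j) :
    (j - i).val + (i - j).val = m := by
  have : (i : ℕ) ≠ j := Fin.val_ne_of_ne h
  rw [← Int.natCast_inj]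
  push_cast
  fin_omega

theorem Fin.val_eq_zero_or_one (a : Fin 2) : a.val = 0 ∨ a.val = 1 := by omega

def SimpleGraph.pathGraph.twoK2Embedding {N d : ℕ} (hd : 3 ≤ d) (hN : d + 2 ≤ N) :
    twoK2 ↪g pathGraph N where
  toFun x := ⟨x.1 * d + x.2, by rcases x.1.val_eq_zero_or_one with h | h <;> rw [h] <;> omega⟩
  inj' := by
    rintro ⟨a, x⟩ ⟨b, y⟩ h
    simp only [Fin.ext_iff, Prod.mk.injEq] at h ⊢
    rcases a.val_eq_zero_or_one with ha | ha <;> rcases b.val_eq_zero_or_one with hb | hb <;>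
      rw [ha, hb] at h ⊢ <;> constructor <;> omega
  map_rel_iff' {x y} := by
    obtain ⟨a, x⟩ := x
    obtain ⟨b, y⟩ := y
    change (pathGraph N).Adj ⟨a * d + x, _⟩ ⟨b * d + y, _⟩ ↔ _
    simp only [pathGraph_adj, twoK2_adj, ne_eq, Fin.ext_iff]
    rcases a.val_eq_zero_or_one with ha | ha <;> rcases b.val_eq_zero_or_one with hb | hb <;>
      simp only [ha, hb, true_and] <;> omega

theorem SimpleGraph.pathGraph.val_twoK2Embedding {N d : ℕ} (hd : 3 ≤ d) (hN : d + 2 ≤ N)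
    (x : Fin 2 × Fin 2) : (twoK2Embedding hd hN x).val = x.1 * d + x.2 := rfl

namespace SimpleGraph.cycleGraph

variable {m n : ℕ} [NeZero m]

def pathEmbedding (h : n < m) (t : Fin m) : pathGraph n ↪g cycleGraph m where
  toFun a := t + Fin.castLE h.le a
  inj' a b hab := by simpa [Fin.ext_iff] using hab
  map_rel_iff' {a b} := by
    change (cycleGraph m).Adj (t + _) (t + _) ↔ _
    rw [cycleGraph_adj', add_sub_add_left_eq_sub, add_sub_add_left_eq_sub, pathGraph_adj,
      ← Int.natCast_inj, ← Int.natCast_inj]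
    have ha : (Fin.castLE h.le a).val = a.val := Fin.val_castLE ..
    have hb : (Fin.castLE h.le b).val = b.val := Fin.val_castLE ..
    have := a.isLt
    have := b.isLt
    fin_omega

theorem pathEmbedding_apply (h : n < m) (t : Fin m) (a : Fin n) :
    pathEmbedding h t a = t + Fin.castLE h.le a := rfl

theorem pathEmbedding_succ (h : n < m) (t : Fin m) {a b : Fin n} (hab : a.val + 1 = b.val) :
    pathEmbedding h t b = pathEmbedding h t a + 1 := by
  have hb := b.isLt
  have : Fin.castLE h.le b = Fin.castLE h.le a + 1 := by
    ext
    rw [Fin.val_add, Fin.val_one', Fin.val_castLE, Fin.val_castLE, Nat.add_mod_mod,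
      Nat.mod_eq_of_lt (by omega)]
    omega
  rw [pathEmbedding_apply, pathEmbedding_apply, this, add_assoc]

theorem pathEmbedding_color_eq (h : n < m) (t : Fin m) {c : Sym2 (Fin m) → Bool} {b : Bool}
    (hc : ∀ a : Fin n, a.val + 1 < n → c s(pathEmbedding h t a, pathEmbedding h t a + 1) = b)
    {a a' : Fin n} (hadj : (pathGraph n).Adj a a') :
    c s(pathEmbedding h t a, pathEmbedding h t a') = b := by
  rcases pathGraph_adj.mp hadj with h' | h'
  · rw [pathEmbedding_succ h t h']
    exact hc a (by omega)
  · rw [pathEmbedding_succ h t h', Sym2.eq_swap]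
    exact hc a' (by omega)

theorem exists_twoK2_embedding {i j : Fin m} (hij : 3 ≤ (j - i).val) (hji : 3 ≤ (i - j).val) :
    ∃ f : twoK2 ↪g cycleGraph m,
      f (0, 0) = i ∧ f (0, 1) = i + 1 ∧ f (1, 0) = j ∧ f (1, 1) = j + 1 := by
  have hsum := Fin.val_sub_add_val_sub (i := i) (j := j) (by rintro rfl; simp at hij)
  let p := pathGraph.twoK2Embedding (N := m - 1) hij (by omega)
  let P := pathEmbedding (n := m - 1) (by omega) i
  have h0 : P (p (0, 0)) = i := by
    rw [pathEmbedding_apply, add_eq_left]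
    ext
    simp [p, pathGraph.val_twoK2Embedding]
  have h1 : P (p (1, 0)) = j := by
    rw [pathEmbedding_apply, ← eq_sub_iff_add_eq']
    ext
    simp [p, pathGraph.val_twoK2Embedding]
  have hsucc (a : Fin 2) : P (p (a, 1)) = P (p (a, 0)) + 1 :=
    pathEmbedding_succ _ _ (by simp [p, pathGraph.val_twoK2Embedding])
  exact ⟨P.comp p, h0, by simp [hsucc, h0], h1, by simp [hsucc, h1]⟩

theorem stronglyArrows_pathGraph_twoK2 (hn : 5 ≤ n) :
    StronglyArrows (cycleGraph (n + 2)) (pathGraph n) twoK2 := by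
  intro c
  by_cases hfar : ∃ i j : Fin (n + 2), c s(i, i + 1) = false ∧ c s(j, j + 1) = false ∧
      3 ≤ (j - i).val ∧ 3 ≤ (i - j).val
  · obtain ⟨i, j, hi, hj, hij, hji⟩ := hfar
    obtain ⟨f, h00, h01, h10, h11⟩ := exists_twoK2_embedding hij hji
    refine Or.inr ⟨f, fun x y => Copies.K2_color_eq_of_forall ?_⟩
    rw [Fin.forall_fin_two, h00, h01, h10, h11]
    exact ⟨hi, hj⟩
  obtain ⟨k, hk⟩ := Fin.exists_arc_of_pairwise_close (P := fun i => c s(i, i + 1) = false)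
    (by omega) fun i j hi hj => by
      by_contra h
      exact hfar ⟨i, j, hi, hj, by omega, by omega⟩
  refine Or.inl ⟨pathEmbedding (by omega) (k + ⟨3, by omega⟩),
    fun a b => pathEmbedding_color_eq _ _ fun a ha => ?_⟩
  by_contra hblue
  have := hk _ (Bool.eq_false_iff.mpr hblue)
  rw [pathEmbedding_apply, add_assoc, add_sub_cancel_left, Fin.val_add, Fin.val_castLE] at this
  rw [Fin.val_mk, Nat.mod_eq_of_lt (by omega)] at this
  omega

end SimpleGraph.cycleGraph

theorem IR_pathGraph_twoK2 {n : ℕ} (hn : 5 ≤ n) : IR (pathGraph n) twoK2 = n + 2 := by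
  have : Nontrivial (Fin n) := Fin.nontrivial_iff_two_le.mpr (by omega)
  refine le_antisymm ?_ ?_
  · simpa using IR_le_card (cycleGraph.stronglyArrows_pathGraph_twoK2 hn)
  · have : Nonempty (Fin n) := ⟨⟨0, by omega⟩⟩
    simpa using card_add_two_le_IR_twoK2 (pathGraph_preconnected n).exists_adj_of_nontrivial

theorem stmt4 :
    (∀ (β : Type) [Fintype β] [Nonempty β] (G : SimpleGraph β),
      (∀ v : β, ∃ w : β, G.Adj v w) →
      Fintype.card β + 2 ≤ IR G twoK2 ∧ IR G twoK2 ≤ 2 * Fintype.card β) ∧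
    (∀ n : ℕ, 5 ≤ n → IR (SimpleGraph.pathGraph n) twoK2 = n + 2) ∧
    (∀ n : ℕ, 2 ≤ n → IR (⊤ : SimpleGraph (Fin n)) twoK2 = 2 * n) :=
  ⟨fun _ _ _ G hG => ⟨card_add_two_le_IR_twoK2 hG, IR_twoK2_le G⟩,
    fun _ => IR_pathGraph_twoK2, fun _ => IR_top_twoK2⟩
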